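/- Let A be a unital ring such that for every 2-torsion free unital A-bimodule M, every Jordan derivation D : A → M is a derivation. Then for every 2-torsion free A-bimodule M (not necessarily unital), every Jordan derivation D : A → M is a derivation. -/

import Mathlib

/-- A (not necessarily unital) bimodule structure of a ring `A` on an
additive group `M`, given by a left action `l` and a right action `r`. -/
structure RingBimod (A M : Type*) [Ring A] [AddCommGroup M] where
  l : A → M → M
  r : M → A → M
  l_add : ∀ a m₁ m₂, l a (m₁ + m₂) = l a m₁ + l a m₂
  add_l : ∀ a₁ a₂ m, l (a₁ + a₂) m = l a₁ m + l a₂ m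
  r_add : ∀ m₁ m₂ a, r (m₁ + m₂) a = r m₁ a + r m₂ a
  add_r : ∀ m a₁ a₂, r m (a₁ + a₂) = r m a₁ + r m a₂
  mul_l : ∀ a₁ a₂ m, l (a₁ * a₂) m = l a₁ (l a₂ m)
  r_mul : ∀ m a₁ a₂, r m (a₁ * a₂) = r (r m a₁) a₂
  l_r : ∀ a₁ m a₂, l a₁ (r m a₂) = r (l a₁ m) a₂

universe u

/-!
Write `P = l 1` and `Q = r · 1`; they are commuting idempotents on `M`, and `PQ` projects onto
the unital corner `1 M 1`. The Jordan identity with `b = 1`, together with 2-torsion freeness,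
gives `PQ D(1) = 0` and `D c = D(1) c + c D(1) + PQ D(c)`. Since `PQ` is a bimodule map onto
`1 M 1`, the map `PQ ∘ D` is a Jordan derivation into a unital 2-torsion free bimodule, hence a
derivation. Substituting the decomposition into `D(a) b + a D(b)`, the cross terms
`a D(1) b = a (PQ D(1)) b` vanish, which leaves `D(ab)`.
-/

theorem eq_of_add_self_eq_add_self {M : Type*} [AddCommGroup M]
    (tf : ∀ m : M, m + m = 0 → m = 0) {u v : M} (h : u + u = v + v) : u = v :=
  sub_eq_zero.mp (tf _ (by rw [sub_add_sub_comm, h, sub_self]))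

namespace RingBimod

variable {A M : Type*} [Ring A] [AddCommGroup M] (bm : RingBimod A M)

theorem l_zero (c : A) : bm.l c 0 = 0 :=
  (AddMonoidHom.mk' (bm.l c) (bm.l_add c)).map_zero

theorem r_zero (c : A) : bm.r 0 c = 0 :=
  (AddMonoidHom.mk' (bm.r · c) (bm.r_add · · c)).map_zero

theorem l_neg (c : A) (m : M) : bm.l c (-m) = -bm.l c m :=
  (AddMonoidHom.mk' (bm.l c) (bm.l_add c)).map_neg m

theorem r_neg (m : M) (c : A) : bm.r (-m) c = -bm.r m c :=
  (AddMonoidHom.mk' (bm.r · c) (bm.r_add · · c)).map_neg m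

theorem l_one_l (c : A) (m : M) : bm.l 1 (bm.l c m) = bm.l c m := by
  rw [← bm.mul_l, one_mul]

theorem l_l_one (c : A) (m : M) : bm.l c (bm.l 1 m) = bm.l c m := by
  rw [← bm.mul_l, mul_one]

theorem r_r_one (m : M) (c : A) : bm.r (bm.r m c) 1 = bm.r m c := by
  rw [← bm.r_mul, mul_one]

theorem r_one_r (m : M) (c : A) : bm.r (bm.r m 1) c = bm.r m c := by
  rw [← bm.r_mul, one_mul]

def unitCorner : AddSubgroup M where
  carrier := {m | bm.l 1 m = m ∧ bm.r m 1 = m}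
  add_mem' := by
    rintro x y ⟨hxl, hxr⟩ ⟨hyl, hyr⟩
    exact ⟨by rw [bm.l_add, hxl, hyl], by rw [bm.r_add, hxr, hyr]⟩
  zero_mem' := ⟨bm.l_zero 1, bm.r_zero 1⟩
  neg_mem' := by
    rintro x ⟨hxl, hxr⟩
    exact ⟨by rw [l_neg, hxl], by rw [r_neg, hxr]⟩

def corner : RingBimod A bm.unitCorner where
  l c m := ⟨bm.l c m, bm.l_one_l c m, by rw [← bm.l_r, m.2.2]⟩
  r m c := ⟨bm.r m c, by rw [bm.l_r, m.2.1], bm.r_r_one m c⟩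
  l_add c m₁ m₂ := Subtype.ext (bm.l_add c m₁ m₂)
  add_l c₁ c₂ m := Subtype.ext (bm.add_l c₁ c₂ m)
  r_add m₁ m₂ c := Subtype.ext (bm.r_add m₁ m₂ c)
  add_r m c₁ c₂ := Subtype.ext (bm.add_r m c₁ c₂)
  mul_l c₁ c₂ m := Subtype.ext (bm.mul_l c₁ c₂ m)
  r_mul m c₁ c₂ := Subtype.ext (bm.r_mul m c₁ c₂)
  l_r c₁ m c₂ := Subtype.ext (bm.l_r c₁ m c₂)

@[simp] theorem coe_corner_l (c : A) (m : bm.unitCorner) :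
    (bm.corner.l c m : M) = bm.l c m := rfl

@[simp] theorem coe_corner_r (m : bm.unitCorner) (c : A) :
    (bm.corner.r m c : M) = bm.r m c := rfl

theorem corner_two_torsion_free (tf : ∀ m : M, m + m = 0 → m = 0) (m : bm.unitCorner)
    (hm : m + m = 0) : m = 0 :=
  Subtype.ext (tf m (congrArg Subtype.val hm))

def cornerProj : M →+ bm.unitCorner where
  toFun m := ⟨bm.l 1 (bm.r m 1), bm.l_one_l 1 _, by rw [← bm.l_r, r_r_one]⟩
  map_zero' := Subtype.ext (by simp only [r_zero, l_zero, ZeroMemClass.coe_zero])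
  map_add' m₁ m₂ := Subtype.ext (by simp only [r_add, l_add, AddMemClass.coe_add])

theorem coe_cornerProj (m : M) : (bm.cornerProj m : M) = bm.l 1 (bm.r m 1) := rfl

theorem cornerProj_l (c : A) (m : M) :
    bm.cornerProj (bm.l c m) = bm.corner.l c (bm.cornerProj m) :=
  Subtype.ext (by simp only [coe_cornerProj, coe_corner_l, ← bm.l_r, l_one_l, l_l_one])

theorem cornerProj_r (m : M) (c : A) :
    bm.cornerProj (bm.r m c) = bm.corner.r (bm.cornerProj m) c :=
  Subtype.ext (by simp only [coe_cornerProj, coe_corner_r, bm.l_r, r_r_one, r_one_r])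

theorem corner_l_one (m : bm.unitCorner) : bm.corner.l 1 m = m := Subtype.ext m.2.1

theorem corner_r_one (m : bm.unitCorner) : bm.corner.r m 1 = m := Subtype.ext m.2.2

theorem r_l_one_eq_r_cornerProj (m : M) (c : A) :
    bm.r (bm.l 1 m) c = bm.r (bm.cornerProj m) c := by
  rw [coe_cornerProj, bm.l_r, r_one_r]

theorem l_r_one_eq_l_cornerProj (c : A) (m : M) :
    bm.l c (bm.r m 1) = bm.l c (bm.cornerProj m) := by
  rw [coe_cornerProj, l_l_one]

theorem l_r_eq_l_r_cornerProj (a : A) (m : M) (b : A) :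
    bm.l a (bm.r m b) = bm.l a (bm.r (bm.cornerProj m) b) := by
  rw [coe_cornerProj, ← bm.l_r, l_l_one, r_one_r]

structure IsJordanDerivation (D : A → M) : Prop where
  map_add : ∀ a b, D (a + b) = D a + D b
  map_jordan : ∀ a b,
    D (a * b + b * a) = bm.r (D a) b + bm.l a (D b) + bm.r (D b) a + bm.l b (D a)

namespace IsJordanDerivation

variable {bm} {D : A → M}

theorem cornerProj_comp (hD : bm.IsJordanDerivation D) :
    bm.corner.IsJordanDerivation (bm.cornerProj ∘ D) where
  map_add a b := by simp only [Function.comp_apply, hD.map_add, _root_.map_add]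
  map_jordan a b := by
    simp only [Function.comp_apply, hD.map_jordan, _root_.map_add, cornerProj_l, cornerProj_r]

theorem jordan_one (hD : bm.IsJordanDerivation D) (c : A) :
    D c + D c = bm.r (D c) 1 + bm.l c (D 1) + bm.r (D 1) c + bm.l 1 (D c) := by
  simpa only [mul_one, one_mul, hD.map_add, _root_.map_add] using hD.map_jordan c 1

theorem cornerProj_one (hD : bm.IsJordanDerivation D) (tf : ∀ m : M, m + m = 0 → m = 0) :
    bm.cornerProj (D 1) = 0 := by
  have h := congrArg bm.cornerProj (hD.jordan_one 1)
  simp only [_root_.map_add, cornerProj_l, cornerProj_r, corner_l_one, corner_r_one] at h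
  rw [add_assoc (_ + _)] at h
  exact bm.corner_two_torsion_free tf _ (left_eq_add.mp h)

theorem eq_r_add_l_add_cornerProj (hD : bm.IsJordanDerivation D)
    (tf : ∀ m : M, m + m = 0 → m = 0) (c : A) :
    D c = bm.r (D 1) c + bm.l c (D 1) + bm.cornerProj (D c) := by
  have hJ := hD.jordan_one c
  have hl : bm.l 1 (D c) = bm.cornerProj (D c) + bm.l c (D 1) + bm.r (bm.l 1 (D 1)) c := by
    have h := congrArg (bm.l 1) hJ
    simp only [bm.l_add, l_one_l] at h
    refine add_right_cancel (h.trans ?_)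
    simp only [coe_cornerProj, bm.l_r]
  have hr : bm.r (D c) 1 = bm.cornerProj (D c) + bm.l c (bm.r (D 1) 1) + bm.r (D 1) c := by
    have h := congrArg (bm.r · 1) hJ
    simp only [bm.r_add, r_r_one] at h
    refine add_left_cancel (h.trans ?_)
    simp only [coe_cornerProj, bm.l_r]
    abel
  have h1 := hD.cornerProj_one tf
  apply eq_of_add_self_eq_add_self tf
  rw [hJ, hl, hr, r_l_one_eq_r_cornerProj, l_r_one_eq_l_cornerProj, h1,
    ZeroMemClass.coe_zero, l_zero, r_zero]
  abel

theorem map_mul (hD : bm.IsJordanDerivation D) (tf : ∀ m : M, m + m = 0 → m = 0)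
    (hcorner : ∀ a b, bm.cornerProj (D (a * b))
      = bm.corner.r (bm.cornerProj (D a)) b + bm.corner.l a (bm.cornerProj (D b)))
    (a b : A) : D (a * b) = bm.r (D a) b + bm.l a (D b) := by
  have hmid : bm.l a (bm.r (D 1) b) = 0 := by
    rw [l_r_eq_l_r_cornerProj, hD.cornerProj_one tf, ZeroMemClass.coe_zero, r_zero, l_zero]
  calc D (a * b)
      = bm.r (D 1) (a * b) + bm.l (a * b) (D 1) + bm.cornerProj (D (a * b)) :=
        hD.eq_r_add_l_add_cornerProj tf (a * b)
    _ = bm.r (bm.r (D 1) a + bm.l a (D 1) + bm.cornerProj (D a)) b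
          + bm.l a (bm.r (D 1) b + bm.l b (D 1) + bm.cornerProj (D b)) := by
        simp only [hcorner, AddMemClass.coe_add, coe_corner_l, coe_corner_r, bm.r_add, bm.l_add,
          bm.r_mul, bm.mul_l, ← bm.l_r, hmid]
        abel
    _ = bm.r (D a) b + bm.l a (D b) := by
        rw [← hD.eq_r_add_l_add_cornerProj tf, ← hD.eq_r_add_l_add_cornerProj tf]

end IsJordanDerivation

end RingBimod

theorem stmt9 (A : Type u) [Ring A]
    (h : ∀ (M : Type u) [AddCommGroup M] (bm : RingBimod A M),
      (∀ m : M, m + m = 0 → m = 0) →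
      (∀ m : M, bm.l 1 m = m ∧ bm.r m 1 = m) →
      ∀ D : A → M, (∀ a b, D (a + b) = D a + D b) →
      (∀ a b, D (a * b + b * a)
          = bm.r (D a) b + bm.l a (D b) + bm.r (D b) a + bm.l b (D a)) →
      ∀ a b, D (a * b) = bm.r (D a) b + bm.l a (D b)) :
    ∀ (M : Type u) [AddCommGroup M] (bm : RingBimod A M),
      (∀ m : M, m + m = 0 → m = 0) →
      ∀ D : A → M, (∀ a b, D (a + b) = D a + D b) →
      (∀ a b, D (a * b + b * a)
          = bm.r (D a) b + bm.l a (D b) + bm.r (D b) a + bm.l b (D a)) →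
      ∀ a b, D (a * b) = bm.r (D a) b + bm.l a (D b) := by
  intro M _ bm tf D hadd hjordan
  have hD : bm.IsJordanDerivation D := ⟨hadd, hjordan⟩
  have hcorner := hD.cornerProj_comp
  exact hD.map_mul tf <| h _ bm.corner (bm.corner_two_torsion_free tf)
    (fun m => ⟨bm.corner_l_one m, bm.corner_r_one m⟩) _ hcorner.map_add hcorner.map_jordan
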